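/- The function $r \mapsto \sqrt{r}\, C(r)$, where $C(r) = \left( \frac{4\pi}{3}\left(1 - \operatorname{sech}^6(r/2)\right) \right)^{-1/2}$, is strictly decreasing on the interval $(0, \operatorname{arcsinh}(1)]$. -/

import Mathlib

/-!
Since `cosh² (r/2) = (1 + cosh r)/2`, we have `√r · C(r) = (4π/3 · q(r)/r)^(-1/2)` with
`q(r) = 1 - 8/(1 + cosh r)³`, so it suffices that `q(r)/r` increases. Its derivative has the sign
of `r q'(r) - q(r)`, which after clearing denominators is
`24 r sinh r - sinh² r (cosh² r + 4 cosh r + 7)`. For `sinh r ≤ 1` we have `cosh r ≤ 3/2` and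
`sinh r ≤ 3r/2`, so the subtracted term is at most `22.5 r sinh r`.
-/

open Real

/-- Teo's function `C(r) = ((4π/3)(1 - sech⁶(r/2)))^{-1/2}`. -/
noncomputable def TeoC (r : ℝ) : ℝ :=
  (Real.sqrt (4 * π / 3 * (1 - (1 / Real.cosh (r / 2)) ^ 6)))⁻¹

open Set

lemma cosh_half_sq (x : ℝ) : cosh (x / 2) ^ 2 = (1 + cosh x) / 2 := by
  have h := cosh_two_mul (x / 2)
  rw [mul_div_cancel₀ x two_ne_zero] at h
  linear_combination -h / 2 + cosh_sq' (x / 2) / 2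

lemma one_sub_one_div_cosh_half_pow_six (x : ℝ) :
    1 - (1 / cosh (x / 2)) ^ 6 = 1 - 8 / (1 + cosh x) ^ 3 := by
  rw [one_div_pow, show cosh (x / 2) ^ 6 = (cosh (x / 2) ^ 2) ^ 3 by ring, cosh_half_sq]
  field_simp
  norm_num

lemma sinh_le_add_sq_div_two {x : ℝ} (hx₀ : 0 ≤ x) (hx₁ : x ≤ 1) :
    sinh x ≤ x + x ^ 2 / 2 := by
  have hexp : exp x - 1 - x ≤ x ^ 2 :=
    (abs_le.1 (abs_exp_sub_one_sub_id_le (abs_le.2 ⟨by linarith, hx₁⟩))).2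
  have hexp_neg : -x + 1 ≤ exp (-x) := add_one_le_exp (-x)
  rw [sinh_eq]
  linarith

lemma hasDerivAt_one_sub_eight_div_one_add_cosh_pow_three (x : ℝ) :
    HasDerivAt (fun r => 1 - 8 / (1 + cosh r) ^ 3) (24 * sinh x / (1 + cosh x) ^ 4) x := by
  have hpos : 0 < 1 + cosh x := by positivity
  have h := ((hasDerivAt_const x (8 : ℝ)).fun_div (((hasDerivAt_cosh x).const_add 1).fun_pow 3)
    (pow_pos hpos 3).ne').const_sub 1
  refine h.congr_deriv ?_
  field_simp
  ring

lemma one_sub_eight_div_one_add_cosh_pow_three_lt {x : ℝ} (hx : 0 < x) (hx₁ : sinh x ≤ 1) :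
    1 - 8 / (1 + cosh x) ^ 3 < x * (24 * sinh x / (1 + cosh x) ^ 4) := by
  have hS : 0 < sinh x := sinh_pos_iff.2 hx
  have hx_le_one : x ≤ 1 := sinh_le_sinh.1 (hx₁.trans (self_le_sinh_iff.2 zero_le_one))
  have hC_sq : cosh x ^ 2 = 1 + sinh x ^ 2 := cosh_sq' x
  have hC : cosh x ≤ 3 / 2 := by nlinarith [cosh_pos x]
  have hS_le : sinh x ≤ 3 / 2 * x := by nlinarith [sinh_le_add_sq_div_two hx.le hx_le_one]
  rw [show 1 - 8 / (1 + cosh x) ^ 3 = ((1 + cosh x) ^ 4 - 8 * (1 + cosh x)) / (1 + cosh x) ^ 4 by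
      field_simp, mul_div_assoc', div_lt_div_iff_of_pos_right (by positivity)]
  calc (1 + cosh x) ^ 4 - 8 * (1 + cosh x)
      = sinh x ^ 2 * (cosh x ^ 2 + 4 * cosh x + 7) := by
        linear_combination (cosh x ^ 2 + 4 * cosh x + 7) * hC_sq
    _ ≤ sinh x ^ 2 * 15 := by gcongr; nlinarith
    _ < x * (24 * sinh x) := by nlinarith

lemma one_sub_eight_div_one_add_cosh_pow_three_pos {x : ℝ} (hx : x ≠ 0) :
    0 < 1 - 8 / (1 + cosh x) ^ 3 := by
  have h : (2 : ℝ) ^ 3 < (1 + cosh x) ^ 3 := by gcongr; linarith [one_lt_cosh.2 hx]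
  rw [sub_pos, div_lt_one (by positivity)]
  linarith

lemma strictMonoOn_one_sub_eight_div_one_add_cosh_pow_three_div_self :
    StrictMonoOn (fun r => (1 - 8 / (1 + cosh r) ^ 3) / r) (Ioc 0 (arsinh 1)) := by
  have hderiv (x : ℝ) (hx : x ≠ 0) : HasDerivAt (fun r => (1 - 8 / (1 + cosh r) ^ 3) / r)
      ((24 * sinh x / (1 + cosh x) ^ 4 * x - (1 - 8 / (1 + cosh x) ^ 3)) / x ^ 2) x := by
    simpa using
      (hasDerivAt_one_sub_eight_div_one_add_cosh_pow_three x).fun_div (hasDerivAt_id x) hx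
  refine strictMonoOn_of_deriv_pos (convex_Ioc 0 _)
    (fun x hx => (hderiv x hx.1.ne').continuousAt.continuousWithinAt) fun x hx => ?_
  rw [interior_Ioc] at hx
  have hsinh : sinh x ≤ 1 := by simpa using sinh_le_sinh.2 hx.2.le
  rw [(hderiv x hx.1.ne').deriv]
  have hkey := one_sub_eight_div_one_add_cosh_pow_three_lt hx.1 hsinh
  exact div_pos (by linarith) (pow_pos hx.1 2)

lemma sqrt_mul_TeoC_eq {r : ℝ} (hr : 0 ≤ r) :
    √r * TeoC r = (√(4 * π / 3 * ((1 - 8 / (1 + cosh r) ^ 3) / r)))⁻¹ := by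
  rw [TeoC, one_sub_one_div_cosh_half_pow_six, ← div_eq_mul_inv, mul_div_assoc', sqrt_div' _ hr,
    inv_div]

/-- `√r · C(r)` is strictly decreasing on `(0, arcsinh 1]`. -/
theorem sqrt_mul_TeoC_strictAnti :
    StrictAntiOn (fun r : ℝ => Real.sqrt r * TeoC r) (Set.Ioc 0 (Real.arsinh 1)) := by
  intro a ha b hb hab
  have hpos : 0 < 4 * π / 3 * ((1 - 8 / (1 + cosh a) ^ 3) / a) :=
    mul_pos (by positivity) (div_pos (one_sub_eight_div_one_add_cosh_pow_three_pos ha.1.ne') ha.1)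
  simp only [sqrt_mul_TeoC_eq ha.1.le, sqrt_mul_TeoC_eq hb.1.le]
  gcongr (√(4 * π / 3 * ?_))⁻¹
  exact strictMonoOn_one_sub_eight_div_one_add_cosh_pow_three_div_self ha hb hab
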